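/- arXiv:1801.06994 — 2 statements merged into one kernel-verified Lean document; each statement's English description precedes it below -/
import Mathlib

section
/- Let E be a valued vector space over K and let F = K^m with the valuation ṽ(y) = min_i v(y_i). Identifying E ⊗_K K^m with E^m, the tensor product valuation u_E ⊗ ṽ equals the direct sum valuation: (u_E ⊗ ṽ)(x₀,…,x_{m−1}) = min_i u_E(x_i). -/
/-!
Under `E ⊗[K] (ι → K) ≃ E^ι`, the coordinate map `x ⊗ y ↦ y i • x` sends a presentation
`Σ xⱼ ⊗ yⱼ` of `z` to `Σ yⱼ i • xⱼ = zᵢ`. By the ultrametric inequality `u_E zᵢ` is at least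
`min_j (v (yⱼ i) + u_E xⱼ) ≥ min_j (u_E xⱼ + ṽ yⱼ)`, so no presentation beats `min_i u_E zᵢ`;
the canonical presentation `Σ zᵢ ⊗ eᵢ` attains it, because `ṽ eᵢ = 0`.
-/

open scoped TensorProduct

/-- The tensor product valuation on `E ⊗[K] F` (supremum over presentations). -/
noncomputable def tensVal {K E F : Type*} [Field K]
    [AddCommGroup E] [Module K E] [AddCommGroup F] [Module K F]
    (uE : E → EReal) (uF : F → EReal) (z : E ⊗[K] F) : EReal :=
  sSup { r : EReal | ∃ P : List (E × F),
    (P.map fun p => p.1 ⊗ₜ[K] p.2).sum = z ∧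
    r = (P.map fun p => uE p.1 + uF p.2).foldr min ⊤ }

theorem List.iInf_mem_cons {α β : Type*} [CompleteLattice α] (f : β → α) (a : β)
    (l : List β) :
    ⨅ b ∈ a :: l, f b = f a ⊓ ⨅ b ∈ l, f b := by
  simp [iInf_or, iInf_inf_eq]

theorem List.foldr_min_top_map {α β : Type*} [CompleteLinearOrder α] (f : β → α)
    (l : List β) :
    (l.map f).foldr min ⊤ = ⨅ b ∈ l, f b := by
  induction l with
  | nil => simp
  | cons a t ih => rw [List.map_cons, List.foldr_cons, ih, List.iInf_mem_cons]

theorem iInf_mem_le_sum_map {α β E : Type*} [CompleteLinearOrder α] [AddCommMonoid E]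
    (u : E → α) (h0 : u 0 = ⊤) (hadd : ∀ x y, min (u x) (u y) ≤ u (x + y))
    (g : β → E) (l : List β) : ⨅ b ∈ l, u (g b) ≤ u (l.map g).sum := by
  induction l with
  | nil => simp [h0]
  | cons a t ih =>
    rw [List.iInf_mem_cons, List.map_cons, List.sum_cons]
    exact (min_le_min le_rfl ih).trans (hadd _ _)

section tensVal

variable {K E F : Type*} [Field K] [AddCommGroup E] [Module K E] [AddCommGroup F] [Module K F]
  {uE : E → EReal} {uF : F → EReal} {z : E ⊗[K] F}

theorem le_tensVal (P : List (E × F)) (hP : (P.map fun p => p.1 ⊗ₜ[K] p.2).sum = z) :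
    ⨅ p ∈ P, uE p.1 + uF p.2 ≤ tensVal uE uF z :=
  le_sSup ⟨P, hP, (List.foldr_min_top_map _ P).symm⟩

theorem tensVal_le {r : EReal}
    (h : ∀ P : List (E × F), (P.map fun p => p.1 ⊗ₜ[K] p.2).sum = z →
      ⨅ p ∈ P, uE p.1 + uF p.2 ≤ r) :
    tensVal uE uF z ≤ r :=
  sSup_le <| by
    rintro _ ⟨P, hP, rfl⟩
    rw [List.foldr_min_top_map]
    exact h P hP

end tensVal

section Pi

open TensorProduct

variable {K E ι : Type*} [Field K] [AddCommGroup E] [Module K E] [DecidableEq ι]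
  {v : K → EReal} {uE : E → EReal}

theorem iInf_apply_single_one (hv0 : v 0 = ⊤) (hv1 : v 1 = 0) (i : ι) :
    ⨅ j, v ((Pi.single i 1 : ι → K) j) = 0 := by
  refine le_antisymm ((iInf_le _ i).trans_eq (by simp [hv1])) (le_iInf fun j => ?_)
  rcases eq_or_ne j i with rfl | hj
  · simp [hv1]
  · simp [hj, hv0]

variable [Fintype ι]

theorem tensVal_le_piScalarRight_apply (uE0 : uE 0 = ⊤)
    (uEsmul : ∀ (a : K) (x : E), v a + uE x ≤ uE (a • x))
    (uEadd : ∀ x y, min (uE x) (uE y) ≤ uE (x + y)) (z : E ⊗[K] (ι → K)) (i : ι) :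
    tensVal uE (fun y : ι → K => ⨅ j, v (y j)) z ≤ uE (piScalarRight K K E ι z i) := by
  refine tensVal_le fun P hP => ?_
  have hcoord : piScalarRight K K E ι z i = (P.map fun p => p.2 i • p.1).sum := by
    subst hP
    simp [map_list_sum, List.map_map, Function.comp_def, Pi.list_sum_apply]
  calc ⨅ p ∈ P, uE p.1 + ⨅ j, v (p.2 j)
      ≤ ⨅ p ∈ P, uE (p.2 i • p.1) := by
        gcongr with p
        rw [add_comm]
        exact (add_le_add_left (iInf_le _ i) _).trans (uEsmul _ _)
    _ ≤ _ := hcoord ▸ iInf_mem_le_sum_map uE uE0 uEadd _ P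

theorem piScalarRight_sum_tmul_single (x : ι → E) :
    piScalarRight K K E ι (∑ i, x i ⊗ₜ[K] (Pi.single i 1 : ι → K)) = x := by
  ext j; simp [Pi.single_apply]

theorem le_tensVal_piScalarRight (hv0 : v 0 = ⊤) (hv1 : v 1 = 0) (z : E ⊗[K] (ι → K)) :
    ⨅ i, uE (piScalarRight K K E ι z i) ≤
      tensVal uE (fun y : ι → K => ⨅ j, v (y j)) z := by
  obtain ⟨x, rfl⟩ := (piScalarRight K K E ι).symm.surjective z
  have hx : ∑ i, x i ⊗ₜ[K] (Pi.single i 1 : ι → K) = (piScalarRight K K E ι).symm x :=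
    (piScalarRight K K E ι).eq_symm_apply.mpr (piScalarRight_sum_tmul_single x)
  convert le_tensVal (Finset.univ.toList.map fun i => (x i, (Pi.single i 1 : ι → K))) ?_ using 1
  · simp only [List.mem_map, Finset.mem_toList, Finset.mem_univ, true_and, iInf_exists]
    rw [iInf_comm]
    simp [iInf_apply_single_one hv0 hv1]
  · rw [List.map_map]
    exact (Finset.sum_map_toList _ _).trans hx

theorem tensVal_piScalarRight (hv0 : v 0 = ⊤) (hv1 : v 1 = 0) (uE0 : uE 0 = ⊤)
    (uEsmul : ∀ (a : K) (x : E), v a + uE x ≤ uE (a • x))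
    (uEadd : ∀ x y, min (uE x) (uE y) ≤ uE (x + y)) (z : E ⊗[K] (ι → K)) :
    tensVal uE (fun y : ι → K => ⨅ j, v (y j)) z =
      ⨅ i, uE (piScalarRight K K E ι z i) :=
  le_antisymm (le_iInf (tensVal_le_piScalarRight_apply uE0 uEsmul uEadd z))
    (le_tensVal_piScalarRight hv0 hv1 z)

end Pi

theorem tensVal_with_min_valuation_general {K E : Type*} [Field K]
    [AddCommGroup E] [Module K E]
    (v : K → EReal) (hv0 : v 0 = ⊤) (hv1 : v 1 = 0)
    (uE : E → EReal) (uEbot : ∀ x, uE x ≠ ⊥)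
    (uEsmul : ∀ (a : K) (x : E), uE (a • x) = v a + uE x)
    (uEadd : ∀ x y, min (uE x) (uE y) ≤ uE (x + y))
    {m : ℕ} (x : Fin m → E) :
    tensVal uE (fun y : Fin m → K => ⨅ i, v (y i))
        (∑ i, x i ⊗ₜ[K] (Pi.single i 1 : Fin m → K)) = ⨅ i, uE (x i) := by
  have uE0 : uE 0 = ⊤ := by
    simpa [hv0, EReal.top_add_of_ne_bot (uEbot 0)] using uEsmul 0 0
  rw [tensVal_piScalarRight hv0 hv1 uE0 (fun a x => (uEsmul a x).ge) uEadd,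
    piScalarRight_sum_tmul_single]

/-- identifying `E ⊗[K] K^m` with `E^m` (an element `(x₀,…,x_{m-1})` of `E^m`
corresponds to `Σ_i x_i ⊗ eᵢ`), the tensor product valuation `u_E ⊗ ṽ` with
`ṽ(y) = min_i v(y_i)` is the direct sum valuation `min_i u_E(x_i)`. -/
theorem tensVal_with_min_valuation {K E : Type*} [Field K]
    [AddCommGroup E] [Module K E]
    (v : K → EReal) (hv0 : v 0 = ⊤) (hvbot : ∀ a, v a ≠ ⊥) (hv1 : v 1 = 0)
    (hvmul : ∀ a b, v (a * b) = v a + v b)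
    (hvadd : ∀ a b, min (v a) (v b) ≤ v (a + b))
    (uE : E → EReal) (uEbot : ∀ x, uE x ≠ ⊥)
    (uEsmul : ∀ (a : K) (x : E), uE (a • x) = v a + uE x)
    (uEadd : ∀ x y, min (uE x) (uE y) ≤ uE (x + y))
    {m : ℕ} (x : Fin m → E) :
    tensVal uE (fun y : Fin m → K => ⨅ i, v (y i))
        (∑ i, x i ⊗ₜ[K] (Pi.single i 1 : Fin m → K)) = ⨅ i, uE (x i) :=
  tensVal_with_min_valuation_general v hv0 hv1 uE uEbot uEsmul uEadd x
end

section
/- Let E, F be valued vector spaces over a valued field K, with reduced valuations. Then the kernel of the tensor product valuation u_E ⊗ u_F on E ⊗_K F is zero; more generally, for arbitrary valuations, ker(u_E ⊗ u_F) is the image of (ker u_E) ⊗_K F + E ⊗_K (ker u_F) — equivalently (as stated) it equals the kernel generated by the two kernels. -/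
/-!
Over a complete field, every linear functional `φ` on a finite-dimensional subspace `V` of a
reduced valued space is bounded, `u w ≤ v (φ w) + C`, and `V` keeps a positive distance from every
vector outside it; the two facts are proved together by induction on `dim V`. Almost orthogonal
vectors then let such a functional extend to any larger finite-dimensional subspace at a loss of
at most `ε`, independently of the dimension. For `z ≠ 0` choose `φ` with `(φ ⊗ id) z = y ≠ 0`:
every presentation `z = ∑ xᵢ ⊗ yᵢ` gives `y = ∑ ψ xᵢ • yᵢ` for such an extension `ψ`, hence
`min (u xᵢ + u yᵢ) ≤ u y + C` and `tensVal z < ⊤`. The general case follows by passing to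
`E ⧸ ker u_E` and `F ⧸ ker u_F`, using right exactness of `⊗`.
-/

open scoped TensorProduct

theorem EReal.le_of_add_coe_le_add_coe {a b : EReal} {c : ℝ} (h : a + c ≤ b + c) : a ≤ b :=
  (EReal.addLECancellable_coe c).add_le_add_iff_right.1 h

theorem EReal.eq_top_of_forall_coe_le {a : EReal} (h : ∀ r : ℝ, (r : EReal) ≤ a) : a = ⊤ :=
  (EReal.eq_top_iff_forall_lt a).2 fun r =>
    (EReal.coe_lt_coe_iff.2 (lt_add_one r)).trans_le (h (r + 1))

theorem EReal.exists_le_add_coe {x : EReal} (hx : x ≠ ⊥) (r : ℝ) :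
    ∃ s : ℝ, (r : EReal) ≤ x + s := by
  induction x with
  | bot => exact absurd rfl hx
  | top => exact ⟨0, by simp⟩
  | coe t => exact ⟨r - t, by rw [← EReal.coe_add, add_sub_cancel]⟩

theorem List.le_foldr_min_map_iff {α : Type*} (l : List α) (f : α → EReal) (a : EReal) :
    a ≤ (l.map f).foldr min ⊤ ↔ ∀ p ∈ l, a ≤ f p :=
  ⟨fun h p hp => h.trans (List.min_le_of_le (List.mem_map_of_mem hp) le_rfl),
    fun h => List.le_min_of_forall_le _ _ (by simpa using h)⟩

structure IsVectorValuation {K E : Type*} [Field K] [AddCommGroup E] [Module K E]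
    (v : K → EReal) (u : E → EReal) : Prop where
  val_zero : v 0 = ⊤
  val_ne_bot : ∀ a, v a ≠ ⊥
  ne_bot : ∀ x, u x ≠ ⊥
  map_smul : ∀ (a : K) (x : E), u (a • x) = v a + u x
  min_le_map_add : ∀ x y, min (u x) (u y) ≤ u (x + y)

open Filter

section

variable {K E : Type*} [Field K] [AddCommGroup E] [Module K E] {v : K → EReal} {u : E → EReal}

def IsCompleteValuation (v : K → EReal) : Prop :=
  ∀ f : ℕ → K, (∀ r : ℝ, ∃ N, ∀ p ≥ N, ∀ q ≥ N, (r : EReal) ≤ v (f p - f q)) →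
    ∃ a : K, ∀ r : ℝ, ∃ N, ∀ p ≥ N, (r : EReal) ≤ v (f p - a)

/-- The distance `exp (- u (x - w))` from a point `x ∉ V` to the points `w` of `V` is bounded
below. -/
def IsValClosed (u : E → EReal) (V : Submodule K E) : Prop :=
  ∀ x ∉ V, ∃ D : ℝ, ∀ w ∈ V, u (x - w) ≤ D

namespace IsVectorValuation

theorem map_zero (hu : IsVectorValuation v u) : u 0 = ⊤ := by
  simpa [hu.val_zero, EReal.top_add_of_ne_bot (hu.ne_bot 0)] using hu.map_smul 0 0

theorem map_neg (hu : IsVectorValuation v u) (x : E) : u (-x) = u x := by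
  have h₁ : u (-x) = v (-1) + u x := by rw [← hu.map_smul, neg_one_smul]
  have h₂ : u x = v (-1) + (v (-1) + u x) := by rw [← h₁, ← hu.map_smul, neg_one_smul, neg_neg]
  induction hx : u x with
  | bot => exact absurd hx (hu.ne_bot x)
  | top => rw [h₁, hx, EReal.add_top_of_ne_bot (hu.val_ne_bot _)]
  | coe s =>
    induction ht : v (-1) with
    | bot => exact absurd ht (hu.val_ne_bot _)
    | top =>
      rw [hx, ht, EReal.top_add_coe, EReal.top_add_top] at h₂
      exact absurd h₂ (EReal.coe_ne_top s)
    | coe t =>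
      rw [hx, ht] at h₂
      rw [h₁, hx, ht]
      norm_cast at h₂ ⊢
      linarith

def ball (hu : IsVectorValuation v u) (r : EReal) : AddSubgroup E where
  carrier := {x | r ≤ u x}
  add_mem' {x y} hx hy := le_trans (le_min hx hy) (hu.min_le_map_add x y)
  zero_mem' := by simp [hu.map_zero]
  neg_mem' {x} hx := by simpa [hu.map_neg] using hx

theorem mem_ball (hu : IsVectorValuation v u) {r : EReal} {x : E} : x ∈ hu.ball r ↔ r ≤ u x :=
  Iff.rfl

theorem min_le_map_sub (hu : IsVectorValuation v u) (x y : E) : min (u x) (u y) ≤ u (x - y) :=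
  (hu.ball _).sub_mem (min_le_left (u x) (u y)) (min_le_right (u x) (u y))

theorem map_sub_of_eq_top (hu : IsVectorValuation v u) (x : E) {n : E} (hn : u n = ⊤) :
    u (x - n) = u x := by
  refine le_antisymm ?_ ?_
  · simpa [hn] using hu.min_le_map_add (x - n) n
  · simpa [hn] using hu.min_le_map_sub x n

def ker (hu : IsVectorValuation v u) : Submodule K E where
  carrier := {x | u x = ⊤}
  add_mem' {x y} (hx : u x = ⊤) (hy : u y = ⊤) :=
    top_le_iff.1 (by simpa [hx, hy] using hu.min_le_map_add x y)
  zero_mem' := hu.map_zero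
  smul_mem' a x (hx : u x = ⊤) := by
    change u (a • x) = ⊤
    rw [hu.map_smul, hx, EReal.add_top_of_ne_bot (hu.val_ne_bot a)]

def quot (hu : IsVectorValuation v u) : E ⧸ hu.ker → EReal :=
  Quotient.lift u fun x y hxy => by
    have h := hu.map_sub_of_eq_top x ((Submodule.quotientRel_def _).1 hxy)
    rwa [sub_sub_cancel, eq_comm] at h

theorem isVectorValuation_quot (hu : IsVectorValuation v u) : IsVectorValuation v hu.quot where
  val_zero := hu.val_zero
  val_ne_bot := hu.val_ne_bot
  ne_bot := by rintro ⟨x⟩; exact hu.ne_bot x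
  map_smul a := by rintro ⟨x⟩; exact hu.map_smul a x
  min_le_map_add := by rintro ⟨x⟩ ⟨y⟩; exact hu.min_le_map_add x y

theorem eq_zero_of_quot_eq_top (hu : IsVectorValuation v u) {q : E ⧸ hu.ker}
    (h : hu.quot q = ⊤) : q = 0 := by
  induction q using Submodule.Quotient.induction_on
  exact (Submodule.Quotient.mk_eq_zero _).2 h

theorem exists_bound_add_smul_of_isValClosed (hu : IsVectorValuation v u) {V : Submodule K E}
    (hV : IsValClosed u V) {x : E} (hx : x ∉ V) :
    ∃ D : ℝ, ∀ w ∈ V, ∀ a : K, u (w + a • x) ≤ v a + D := by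
  obtain ⟨D, hD⟩ := hV x hx
  refine ⟨D, fun w hw a => ?_⟩
  rcases eq_or_ne a 0 with rfl | ha
  · simp [hu.val_zero]
  · have h : w + a • x = a • (x - (-a⁻¹) • w) := by
      rw [smul_sub, smul_smul, mul_neg, mul_inv_cancel₀ ha, neg_smul, one_smul, sub_neg_eq_add,
        add_comm]
    rw [h, hu.map_smul]
    exact add_le_add_right (hD _ (V.smul_mem _ hw)) _

theorem exists_bound_of_isValClosed_ker (hu : IsVectorValuation v u) {V : Submodule K E}
    {φ : V →ₗ[K] K} (hφ : φ ≠ 0) (hker : IsValClosed u ((LinearMap.ker φ).map V.subtype)) :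
    ∃ C : ℝ, ∀ w : V, u w ≤ v (φ w) + C := by
  obtain ⟨x, hx⟩ : ∃ x, φ x = 1 := by
    obtain ⟨y, hy⟩ := DFunLike.ne_iff.1 hφ
    exact ⟨(φ y)⁻¹ • y, by simp [inv_mul_cancel₀ hy]⟩
  have hxW : (x : E) ∉ (LinearMap.ker φ).map V.subtype := by
    rintro ⟨y, hy, hyx⟩
    obtain rfl := Subtype.coe_injective hyx
    simp [hx] at hy
  obtain ⟨D, hD⟩ := hu.exists_bound_add_smul_of_isValClosed hker hxW
  refine ⟨D, fun w => ?_⟩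
  have hmem : ((w - φ w • x : V) : E) ∈ (LinearMap.ker φ).map V.subtype :=
    ⟨w - φ w • x, by simp [hx], rfl⟩
  simpa using hD _ hmem (φ w)

theorem exists_limit_of_cauchy (hK : IsCompleteValuation v) (hu : IsVectorValuation v u)
    {V : Submodule K E} [FiniteDimensional K V]
    (hbdd : ∀ φ : V →ₗ[K] K, ∃ C : ℝ, ∀ w : V, u w ≤ v (φ w) + C) (W : ℕ → V)
    (hW : ∀ r : ℝ, ∃ N, ∀ p ≥ N, ∀ q ≥ N, (r : EReal) ≤ u (W p - W q)) :
    ∃ w : V, ∀ r : ℝ, ∀ᶠ k in atTop, (r : EReal) ≤ u (W k - w) := by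
  let b := Module.finBasis K V
  have hcoord : ∀ i, ∃ A : K, ∀ r : ℝ, ∃ N, ∀ p ≥ N, (r : EReal) ≤ v (b.coord i (W p) - A) := by
    intro i
    obtain ⟨C, hC⟩ := hbdd (b.coord i)
    refine hK _ fun r => ?_
    obtain ⟨N, hN⟩ := hW (r + C)
    refine ⟨N, fun p hp q hq => EReal.le_of_add_coe_le_add_coe (c := C) ?_⟩
    simpa [map_sub] using (hN p hp q hq).trans (hC (W p - W q))
  choose A hA using hcoord
  refine ⟨b.equivFun.symm A, fun r => ?_⟩
  have hlow : ∀ i, ∃ m : ℝ, (m : EReal) ≤ u (b i) := fun i =>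
    (EReal.exists_between_coe_real (bot_lt_iff_ne_bot.2 (hu.ne_bot (b i)))).imp fun _ h => h.2.le
  choose m hm using hlow
  filter_upwards [eventually_all.2 fun i => eventually_atTop.2 (hA i (r - m i))] with k hk
  have hsum : W k - b.equivFun.symm A = ∑ i, (b.coord i (W k) - A i) • b i := by
    conv_lhs => rw [← b.sum_repr (W k)]
    simp [Finset.sum_sub_distrib, sub_smul]
  rw [← Submodule.coe_sub, hsum, Submodule.coe_sum]
  refine (hu.ball r).sum_mem fun i _ => ?_
  rw [hu.mem_ball, Submodule.coe_smul, hu.map_smul]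
  calc (r : EReal) = ((r - m i : ℝ) : EReal) + m i := by rw [← EReal.coe_add, sub_add_cancel]
    _ ≤ _ := add_le_add (hk i) (hm i)

theorem isValClosed_of_forall_exists_bound (hK : IsCompleteValuation v)
    (hu : IsVectorValuation v u) (hred : ∀ x, u x = ⊤ → x = 0) {V : Submodule K E}
    [FiniteDimensional K V] (hbdd : ∀ φ : V →ₗ[K] K, ∃ C : ℝ, ∀ w : V, u w ≤ v (φ w) + C) :
    IsValClosed u V := by
  intro x hx
  by_contra! hfar
  choose W hWV hW using fun k : ℕ => hfar k
  have hnear : ∀ r : ℝ, ∀ p ≥ ⌈r⌉₊, (r : EReal) ≤ u (x - W p) := fun r p hp =>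
    (EReal.coe_le_coe_iff.2 ((Nat.le_ceil r).trans (Nat.cast_le.2 hp))).trans (hW p).le
  obtain ⟨w, hw⟩ := hu.exists_limit_of_cauchy hK hbdd (fun k => ⟨W k, hWV k⟩) fun r =>
    ⟨⌈r⌉₊, fun p hp q hq => by
      simpa using (le_min (hnear r q hq) (hnear r p hp)).trans
        (hu.min_le_map_sub (x - W q) (x - W p))⟩
  have hxw : u (x - w) = ⊤ := EReal.eq_top_of_forall_coe_le fun r => by
    obtain ⟨k, hk⟩ := (hw r).exists_forall_of_atTop
    have h := (hu.ball r).add_mem (hnear r (max k ⌈r⌉₊) (le_max_right _ _))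
      (hk (max k ⌈r⌉₊) (le_max_left _ _))
    rwa [sub_add_sub_cancel] at h
  exact hx (sub_eq_zero.1 (hred _ hxw) ▸ w.2)

theorem exists_bound_of_finiteDimensional (hK : IsCompleteValuation v)
    (hu : IsVectorValuation v u) (hred : ∀ x, u x = ⊤ → x = 0) (V : Submodule K E)
    [FiniteDimensional K V] (φ : V →ₗ[K] K) : ∃ C : ℝ, ∀ w : V, u w ≤ v (φ w) + C := by
  induction hn : Module.finrank K V using Nat.strong_induction_on generalizing V with
  | _ n ih =>
  rcases eq_or_ne φ 0 with rfl | hφ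
  · exact ⟨0, fun w => by simp [hu.val_zero]⟩
  refine hu.exists_bound_of_isValClosed_ker hφ
    (hu.isValClosed_of_forall_exists_bound hK hred fun ψ => ih _ ?_ _ ψ rfl)
  rw [← hn, Submodule.finrank_map_subtype_eq]
  exact Submodule.finrank_lt (by simpa [LinearMap.ker_eq_top] using hφ)

theorem isValClosed_of_finiteDimensional (hK : IsCompleteValuation v)
    (hu : IsVectorValuation v u) (hred : ∀ x, u x = ⊤ → x = 0) (V : Submodule K E)
    [FiniteDimensional K V] : IsValClosed u V :=
  hu.isValClosed_of_forall_exists_bound hK hred (hu.exists_bound_of_finiteDimensional hK hred V)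

theorem exists_almost_orthogonal (hu : IsVectorValuation v u) {V : Submodule K E}
    (hV : IsValClosed u V) {x : E} (hx : x ∉ V) {ε : ℝ} (hε : 0 < ε) :
    ∃ w₀ ∈ V, ∀ w ∈ V, ∀ a : K, u (w + a • (x - w₀)) ≤ u w + ε := by
  obtain ⟨D, hD⟩ := hV x hx
  set d := sSup ((fun w => u (x - w)) '' V)
  have hdD : d ≤ D := sSup_le (by rintro _ ⟨w, hw, rfl⟩; exact hD w hw)
  have hxd : u x ≤ d := le_sSup ⟨0, V.zero_mem, by simp⟩
  have hd : ((d.toReal : ℝ) : EReal) = d := EReal.coe_toReal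
    (ne_top_of_le_ne_top (EReal.coe_ne_top D) hdD) (ne_bot_of_le_ne_bot (hu.ne_bot x) hxd)
  obtain ⟨_, ⟨w₀, hw₀, rfl⟩, hlt⟩ := lt_sSup_iff.1
    (lt_of_lt_of_eq (EReal.coe_lt_coe_iff.2 (by linarith : d.toReal - ε < d.toReal)) hd)
  refine ⟨w₀, hw₀, fun w hw a => ?_⟩
  have hfar : u (w + a • (x - w₀)) ≤ u (a • (x - w₀)) + ε := by
    rcases eq_or_ne a 0 with rfl | ha
    · simp [hu.map_zero]
    have h : w + a • (x - w₀) = a • (x - (w₀ - a⁻¹ • w)) := by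
      simp only [smul_sub, smul_inv_smul₀ ha]
      abel
    rw [h, hu.map_smul, hu.map_smul, add_assoc]
    refine add_le_add_right ?_ _
    calc u (x - (w₀ - a⁻¹ • w)) ≤ d := le_sSup ⟨_, V.sub_mem hw₀ (V.smul_mem _ hw), rfl⟩
      _ = ((d.toReal - ε : ℝ) : EReal) + ε := by rw [← EReal.coe_add, sub_add_cancel, hd]
      _ ≤ u (x - w₀) + ε := add_le_add_left hlt.le _
  by_cases hle : u (w + a • (x - w₀)) ≤ u w
  · exact hle.trans (le_add_of_nonneg_right (EReal.coe_nonneg.2 hε.le))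
  · have h := hu.min_le_map_sub (w + a • (x - w₀)) (a • (x - w₀))
    rw [add_sub_cancel_right, min_le_iff] at h
    exact hfar.trans (add_le_add_left (h.resolve_left hle) _)

theorem exists_extension_sup_span (hu : IsVectorValuation v u) {V : Submodule K E}
    (hV : IsValClosed u V) {x : E} (hx : x ∉ V) {φ : E →ₗ[K] K} {C : ℝ}
    (hφ : ∀ w ∈ V, u w ≤ v (φ w) + C) {ε : ℝ} (hε : 0 < ε) :
    ∃ φ' : E →ₗ[K] K, (∀ w ∈ V, φ' w = φ w) ∧ ∀ y ∈ V ⊔ K ∙ x, u y ≤ v (φ' y) + (C + ε) := by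
  obtain ⟨w₀, hw₀, horth⟩ := hu.exists_almost_orthogonal hV hx hε
  have hx' : x - w₀ ∉ V := fun h => hx (by simpa using V.add_mem h hw₀)
  obtain ⟨ℓ, hℓx, hℓV⟩ := Submodule.exists_dual_map_eq_bot_of_notMem hx' inferInstance
  have hℓ : ∀ w ∈ V, ℓ w = 0 := fun w hw => (Submodule.mem_bot K).1 (hℓV ▸ V.mem_map_of_mem hw)
  set φ' := φ - (φ (x - w₀) / ℓ (x - w₀)) • ℓ
  have hφ'V : ∀ w ∈ V, φ' w = φ w := fun w hw => by simp [φ', hℓ w hw]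
  have hφ'x : φ' (x - w₀) = 0 := by
    simp only [φ', LinearMap.sub_apply, LinearMap.smul_apply, smul_eq_mul, div_mul_cancel₀ _ hℓx,
      sub_self]
  refine ⟨φ', hφ'V, fun y hy => ?_⟩
  obtain ⟨w, hw, _, hz, rfl⟩ := Submodule.mem_sup.1 hy
  obtain ⟨a, rfl⟩ := Submodule.mem_span_singleton.1 hz
  have hw' : w + a • w₀ ∈ V := V.add_mem hw (V.smul_mem a hw₀)
  have hy' : w + a • x = (w + a • w₀) + a • (x - w₀) := by rw [smul_sub]; abel
  rw [hy', φ'.map_add, φ'.map_smul, hφ'x, smul_zero, add_zero, hφ'V _ hw', ← add_assoc]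
  exact (horth _ hw' a).trans (add_le_add_left (hφ _ hw') _)

theorem exists_extension (hK : IsCompleteValuation v) (hu : IsVectorValuation v u)
    (hred : ∀ x, u x = ⊤ → x = 0) {V U : Submodule K E} [FiniteDimensional K U] (hVU : V ≤ U)
    {φ : E →ₗ[K] K} {C : ℝ} (hφ : ∀ w ∈ V, u w ≤ v (φ w) + C) {ε : ℝ} (hε : 0 < ε) :
    ∃ ψ : E →ₗ[K] K, (∀ w ∈ V, ψ w = φ w) ∧ ∀ x ∈ U, u x ≤ v (ψ x) + (C + ε) := by
  obtain ⟨k, hk⟩ : ∃ k, Module.finrank K U ≤ Module.finrank K V + k := ⟨_, Nat.le_add_left _ _⟩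
  induction k generalizing V φ C ε with
  | zero =>
    obtain rfl := Submodule.eq_of_le_of_finrank_le hVU (by simpa using hk)
    exact ⟨φ, fun _ _ => rfl, fun x hx => (hφ x hx).trans
      (add_le_add_right (le_add_of_nonneg_right (EReal.coe_nonneg.2 hε.le)) _)⟩
  | succ k ih =>
    by_cases hUV : U ≤ V
    · obtain rfl := le_antisymm hVU hUV
      exact ih hVU hφ hε (Nat.le_add_right _ _)
    obtain ⟨x, hxU, hxV⟩ := SetLike.not_le_iff_exists.1 hUV
    have : FiniteDimensional K V := Submodule.finiteDimensional_of_le hVU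
    obtain ⟨φ', hφ'V, hφ'⟩ := hu.exists_extension_sup_span
      (hu.isValClosed_of_finiteDimensional hK hred V) hxV hφ (half_pos hε)
    have hV'U : V ⊔ K ∙ x ≤ U := sup_le hVU ((Submodule.span_singleton_le_iff_mem x U).2 hxU)
    have : FiniteDimensional K ↥(V ⊔ K ∙ x) := Submodule.finiteDimensional_of_le hV'U
    have hVV' : Module.finrank K V < Module.finrank K ↥(V ⊔ K ∙ x) :=
      Submodule.finrank_lt_finrank_of_lt (left_lt_sup.2 fun h =>
        hxV (h (Submodule.mem_span_singleton_self x)))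
    obtain ⟨ψ, hψV', hψ⟩ := ih hV'U hφ' (half_pos hε) (by omega)
    refine ⟨ψ, fun w hw => (hψV' w (Submodule.mem_sup_left hw)).trans (hφ'V w hw), ?_⟩
    intro y hy
    simpa [add_assoc, ← EReal.coe_add] using hψ y hy

theorem exists_bounded_extension (hK : IsCompleteValuation v) (hu : IsVectorValuation v u)
    (hred : ∀ x, u x = ⊤ → x = 0) (V : Submodule K E) [FiniteDimensional K V]
    (φ : E →ₗ[K] K) : ∃ C : ℝ, ∀ U : Submodule K E, [FiniteDimensional K U] → V ≤ U →
      ∃ ψ : E →ₗ[K] K, (∀ w ∈ V, ψ w = φ w) ∧ ∀ x ∈ U, u x ≤ v (ψ x) + C := by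
  obtain ⟨C, hC⟩ := hu.exists_bound_of_finiteDimensional hK hred V (φ ∘ₗ V.subtype)
  exact ⟨C + 1, fun U _ hVU => hu.exists_extension hK hred hVU (fun w hw => hC ⟨w, hw⟩) one_pos⟩

end IsVectorValuation

section TensorProduct

variable {F : Type*} [AddCommGroup F] [Module K F] {uE : E → EReal} {uF : F → EReal}

theorem tensVal_eq_top_iff (z : E ⊗[K] F) :
    tensVal uE uF z = ⊤ ↔ ∀ r : ℝ, ∃ P : List (E × F),
      (P.map fun p => p.1 ⊗ₜ[K] p.2).sum = z ∧ ∀ p ∈ P, (r : EReal) ≤ uE p.1 + uF p.2 := by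
  rw [tensVal, sSup_eq_top]
  constructor
  · intro h r
    obtain ⟨_, ⟨P, hP, rfl⟩, hr⟩ := h r (EReal.coe_lt_top r)
    exact ⟨P, hP, (List.le_foldr_min_map_iff _ _ _).1 hr.le⟩
  · intro h b hb
    obtain ⟨r, hbr, -⟩ := EReal.exists_between_coe_real hb
    obtain ⟨P, hP, hrP⟩ := h r
    exact ⟨_, ⟨P, hP, rfl⟩, hbr.trans_le ((List.le_foldr_min_map_iff _ _ _).2 hrP)⟩

theorem tensVal_zero : tensVal uE uF (0 : E ⊗[K] F) = ⊤ :=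
  (tensVal_eq_top_iff _).2 fun _ => ⟨[], by simp, by simp⟩

theorem tensVal_add_eq_top {z w : E ⊗[K] F} (hz : tensVal uE uF z = ⊤)
    (hw : tensVal uE uF w = ⊤) : tensVal uE uF (z + w) = ⊤ := by
  rw [tensVal_eq_top_iff] at *
  intro r
  obtain ⟨P, rfl, hPr⟩ := hz r
  obtain ⟨Q, rfl, hQr⟩ := hw r
  exact ⟨P ++ Q, by simp, fun p hp => (List.mem_append.1 hp).elim (hPr p) (hQr p)⟩

theorem tensVal_smul_eq_top (hE : IsVectorValuation v uE) (a : K) {z : E ⊗[K] F}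
    (hz : tensVal uE uF z = ⊤) : tensVal uE uF (a • z) = ⊤ := by
  rw [tensVal_eq_top_iff] at *
  intro r
  obtain ⟨s, hs⟩ := EReal.exists_le_add_coe (hE.val_ne_bot a) r
  obtain ⟨P, rfl, hPr⟩ := hz s
  refine ⟨P.map fun p => (a • p.1, p.2), ?_, ?_⟩
  · simp [List.smul_sum, List.map_map, Function.comp_def, TensorProduct.smul_tmul']
  · simp only [List.mem_map]
    rintro _ ⟨p, hp, rfl⟩
    rw [hE.map_smul, add_assoc]
    exact hs.trans (add_le_add_right (hPr p hp) _)

theorem tensVal_tmul_eq_top_of_left (hF : IsVectorValuation v uF) {x : E} (hx : uE x = ⊤)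
    (y : F) : tensVal uE uF (x ⊗ₜ[K] y) = ⊤ :=
  (tensVal_eq_top_iff _).2 fun _ =>
    ⟨[(x, y)], by simp, by simp [hx, EReal.top_add_of_ne_bot (hF.ne_bot y)]⟩

theorem tensVal_tmul_eq_top_of_right (hE : IsVectorValuation v uE) (x : E) {y : F}
    (hy : uF y = ⊤) : tensVal uE uF (x ⊗ₜ[K] y) = ⊤ :=
  (tensVal_eq_top_iff _).2 fun _ =>
    ⟨[(x, y)], by simp, by simp [hy, EReal.add_top_of_ne_bot (hE.ne_bot x)]⟩

theorem tensVal_map_eq_top {E' F' : Type*} [AddCommGroup E'] [Module K E'] [AddCommGroup F']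
    [Module K F'] {uE' : E' → EReal} {uF' : F' → EReal} (f : E →ₗ[K] E') (g : F →ₗ[K] F')
    (hf : ∀ x, uE x ≤ uE' (f x)) (hg : ∀ y, uF y ≤ uF' (g y)) {z : E ⊗[K] F}
    (hz : tensVal uE uF z = ⊤) : tensVal uE' uF' (TensorProduct.map f g z) = ⊤ := by
  rw [tensVal_eq_top_iff] at *
  intro r
  obtain ⟨P, rfl, hPr⟩ := hz r
  refine ⟨P.map fun p => (f p.1, g p.2), ?_, ?_⟩
  · simp [map_list_sum, List.map_map, Function.comp_def]
  · simp only [List.mem_map]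
    rintro _ ⟨p, hp, rfl⟩
    exact (hPr p hp).trans (add_le_add (hf _) (hg _))

theorem exists_list_sum_tmul_eq (z : E ⊗[K] F) :
    ∃ P : List (E × F), (P.map fun p => p.1 ⊗ₜ[K] p.2).sum = z := by
  induction z using TensorProduct.induction_on with
  | zero => exact ⟨[], by simp⟩
  | tmul x y => exact ⟨[(x, y)], by simp⟩
  | add z w hz hw =>
    obtain ⟨P, rfl⟩ := hz
    obtain ⟨Q, rfl⟩ := hw
    exact ⟨P ++ Q, by simp⟩

theorem lid_rTensor_list_sum (ψ : E →ₗ[K] K) (P : List (E × F)) :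
    TensorProduct.lid K F (ψ.rTensor F (P.map fun p => p.1 ⊗ₜ[K] p.2).sum) =
      (P.map fun p => ψ p.1 • p.2).sum := by
  simp [map_list_sum, List.map_map, Function.comp_def]

theorem exists_lid_rTensor_ne_zero {z : E ⊗[K] F} (hz : z ≠ 0) :
    ∃ φ : E →ₗ[K] K, TensorProduct.lid K F (φ.rTensor F z) ≠ 0 := by
  classical
  let b := Module.Basis.ofVectorSpace K E
  have hg : TensorProduct.finsuppScalarLeft K F _ (b.repr.toLinearMap.rTensor F z) ≠ 0 := by
    rw [LinearEquiv.map_ne_zero_iff]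
    exact (map_ne_zero_iff _ (LinearEquiv.rTensor F b.repr).injective).2 hz
  obtain ⟨i, hi⟩ := Finsupp.ne_iff.1 hg
  refine ⟨b.coord i, ?_⟩
  rwa [TensorProduct.finsuppScalarLeft_apply, ← LinearMap.comp_apply (LinearMap.rTensor F _),
    ← LinearMap.rTensor_comp] at hi

theorem eq_zero_of_tensVal_eq_top (hK : IsCompleteValuation v) (hE : IsVectorValuation v uE)
    (hF : IsVectorValuation v uF) (hredE : ∀ x, uE x = ⊤ → x = 0)
    (hredF : ∀ y, uF y = ⊤ → y = 0) {z : E ⊗[K] F} (hz : tensVal uE uF z = ⊤) : z = 0 := by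
  classical
  by_contra hz0
  obtain ⟨φ, hφ⟩ := exists_lid_rTensor_ne_zero hz0
  set y := TensorProduct.lid K F (φ.rTensor F z)
  obtain ⟨B, hB⟩ : ∃ B : ℝ, uF y = B :=
    ⟨_, (EReal.coe_toReal (fun h => hφ (hredF _ h)) (hF.ne_bot _)).symm⟩
  obtain ⟨P₀, hP₀⟩ := exists_list_sum_tmul_eq z
  have hy : y = (P₀.map fun p => φ p.1 • p.2).sum := by rw [← lid_rTensor_list_sum, hP₀]
  let V := Submodule.span K ((P₀.map Prod.fst).toFinset : Set E)
  obtain ⟨C, hC⟩ := hE.exists_bounded_extension hK hredE V φ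
  obtain ⟨P, hP, hPr⟩ := (tensVal_eq_top_iff z).1 hz (B + 1 + C)
  obtain ⟨ψ, hψV, hψ⟩ := hC (V ⊔ Submodule.span K ((P.map Prod.fst).toFinset : Set E)) le_sup_left
  have hψy : (P.map fun p => ψ p.1 • p.2).sum = y := by
    rw [← lid_rTensor_list_sum, hP, ← hP₀, lid_rTensor_list_sum, hy]
    refine congrArg List.sum (List.map_congr_left fun p hp => ?_)
    rw [hψV _ (Submodule.subset_span (by simpa using ⟨p.2, hp⟩))]
  have hlarge : ((B + 1 : ℝ) : EReal) ≤ uF y := by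
    rw [← hψy]
    refine (hF.ball _).list_sum_mem fun w hw => ?_
    obtain ⟨p, hp, rfl⟩ := List.mem_map.1 hw
    have hpU : p.1 ∈ V ⊔ Submodule.span K ((P.map Prod.fst).toFinset : Set E) :=
      Submodule.mem_sup_right (Submodule.subset_span (by simpa using ⟨p.2, hp⟩))
    rw [hF.mem_ball, hF.map_smul]
    refine EReal.le_of_add_coe_le_add_coe (c := C) ?_
    calc ((B + 1 : ℝ) : EReal) + C = ((B + 1 + C : ℝ) : EReal) := rfl
      _ ≤ uE p.1 + uF p.2 := hPr p hp
      _ ≤ v (ψ p.1) + C + uF p.2 := add_le_add_left (hψ _ hpU) _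
      _ = v (ψ p.1) + uF p.2 + C := add_right_comm _ _ _
  rw [hB, EReal.coe_le_coe_iff] at hlarge
  linarith

theorem mem_span_of_tensVal_eq_top (hK : IsCompleteValuation v) (hE : IsVectorValuation v uE)
    (hF : IsVectorValuation v uF) {z : E ⊗[K] F} (hz : tensVal uE uF z = ⊤) :
    z ∈ Submodule.span K
      ({ z : E ⊗[K] F | ∃ x y, uE x = ⊤ ∧ z = x ⊗ₜ[K] y } ∪
       { z : E ⊗[K] F | ∃ x y, uF y = ⊤ ∧ z = x ⊗ₜ[K] y }) := by
  have hq : TensorProduct.map hE.ker.mkQ hF.ker.mkQ z = 0 :=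
    eq_zero_of_tensVal_eq_top hK hE.isVectorValuation_quot hF.isVectorValuation_quot
      (fun _ => hE.eq_zero_of_quot_eq_top) (fun _ => hF.eq_zero_of_quot_eq_top)
      (tensVal_map_eq_top _ _ (fun _ => le_rfl) (fun _ => le_rfl) hz)
  rw [← LinearMap.mem_ker, TensorProduct.map_ker (LinearMap.exact_subtype_mkQ hE.ker)
    (Submodule.mkQ_surjective _) (LinearMap.exact_subtype_mkQ hF.ker)
    (Submodule.mkQ_surjective _)] at hq
  refine SetLike.le_def.1 (sup_le ?_ ?_) hq
  · rw [LinearMap.lTensor, TensorProduct.range_map_eq_span_tmul]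
    refine Submodule.span_mono ?_
    rintro _ ⟨x, ⟨y, hy⟩, rfl⟩
    exact Or.inr ⟨x, y, hy, rfl⟩
  · rw [LinearMap.rTensor, TensorProduct.range_map_eq_span_tmul]
    refine Submodule.span_mono ?_
    rintro _ ⟨⟨x, hx⟩, y, rfl⟩
    exact Or.inl ⟨x, y, hx, rfl⟩

theorem tensVal_eq_top_of_mem_span (hE : IsVectorValuation v uE) (hF : IsVectorValuation v uF)
    {z : E ⊗[K] F} (hz : z ∈ Submodule.span K
      ({ z : E ⊗[K] F | ∃ x y, uE x = ⊤ ∧ z = x ⊗ₜ[K] y } ∪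
       { z : E ⊗[K] F | ∃ x y, uF y = ⊤ ∧ z = x ⊗ₜ[K] y })) :
    tensVal uE uF z = ⊤ := by
  induction hz using Submodule.span_induction with
  | mem _ h =>
    rcases h with ⟨x, y, hx, rfl⟩ | ⟨x, y, hy, rfl⟩
    exacts [tensVal_tmul_eq_top_of_left hF hx y, tensVal_tmul_eq_top_of_right hE x hy]
  | zero => exact tensVal_zero
  | add _ _ _ _ h₁ h₂ => exact tensVal_add_eq_top h₁ h₂
  | smul a _ _ h => exact tensVal_smul_eq_top hE a h

end TensorProduct

end

theorem tensVal_kernel_general {K E F : Type*} [Field K]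
    [AddCommGroup E] [Module K E] [AddCommGroup F] [Module K F]
    (v : K → EReal) (hv0 : v 0 = ⊤) (hvbot : ∀ a, v a ≠ ⊥)
    (hcomplete : ∀ f : ℕ → K,
      (∀ r : ℝ, ∃ N, ∀ p ≥ N, ∀ q ≥ N, (r : EReal) ≤ v (f p - f q)) →
      ∃ a : K, ∀ r : ℝ, ∃ N, ∀ p ≥ N, (r : EReal) ≤ v (f p - a))
    (uE : E → EReal) (uEbot : ∀ x, uE x ≠ ⊥)
    (uEsmul : ∀ (a : K) (x : E), uE (a • x) = v a + uE x)
    (uEadd : ∀ x y, min (uE x) (uE y) ≤ uE (x + y))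
    (uF : F → EReal) (uFbot : ∀ y, uF y ≠ ⊥)
    (uFsmul : ∀ (a : K) (y : F), uF (a • y) = v a + uF y)
    (uFadd : ∀ x y, min (uF x) (uF y) ≤ uF (x + y)) :
    ((∀ x : E, uE x = ⊤ → x = 0) → (∀ y : F, uF y = ⊤ → y = 0) →
        ∀ z : E ⊗[K] F, tensVal uE uF z = ⊤ → z = 0) ∧
    {z : E ⊗[K] F | tensVal uE uF z = ⊤} =
      (Submodule.span K
        ({ z : E ⊗[K] F | ∃ x y, uE x = ⊤ ∧ z = x ⊗ₜ[K] y } ∪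
         { z : E ⊗[K] F | ∃ x y, uF y = ⊤ ∧ z = x ⊗ₜ[K] y }) : Set (E ⊗[K] F)) := by
  have hE : IsVectorValuation v uE := ⟨hv0, hvbot, uEbot, uEsmul, uEadd⟩
  have hF : IsVectorValuation v uF := ⟨hv0, hvbot, uFbot, uFsmul, uFadd⟩
  refine ⟨fun hredE hredF z => eq_zero_of_tensVal_eq_top hcomplete hE hF hredE hredF, ?_⟩
  ext z
  exact ⟨mem_span_of_tensVal_eq_top hcomplete hE hF, tensVal_eq_top_of_mem_span hE hF⟩

/-- over a complete algebraically closed field with dense value group,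
the kernel of the tensor product valuation of two reduced valuations is zero; more
generally, `ker (u_E ⊗ u_F)` is the submodule generated by the simple tensors with one
factor in `ker u_E` or in `ker u_F` (the image of `ker u_E ⊗ F + E ⊗ ker u_F`). -/
theorem tensVal_kernel {K E F : Type*} [Field K] [IsAlgClosed K]
    [AddCommGroup E] [Module K E] [AddCommGroup F] [Module K F]
    (v : K → EReal) (hv0 : v 0 = ⊤) (hvbot : ∀ a, v a ≠ ⊥)
    (hvmul : ∀ a b, v (a * b) = v a + v b)
    (hvadd : ∀ a b, min (v a) (v b) ≤ v (a + b))
    (hker : ∀ a : K, v a = ⊤ → a = 0)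
    (hdense : ∀ α β : ℝ, α < β → ∃ a : K, (α : EReal) < v a ∧ v a < (β : EReal))
    (hcomplete : ∀ f : ℕ → K,
      (∀ r : ℝ, ∃ N, ∀ p ≥ N, ∀ q ≥ N, (r : EReal) ≤ v (f p - f q)) →
      ∃ a : K, ∀ r : ℝ, ∃ N, ∀ p ≥ N, (r : EReal) ≤ v (f p - a))
    (uE : E → EReal) (uEbot : ∀ x, uE x ≠ ⊥)
    (uEsmul : ∀ (a : K) (x : E), uE (a • x) = v a + uE x)
    (uEadd : ∀ x y, min (uE x) (uE y) ≤ uE (x + y))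
    (uF : F → EReal) (uFbot : ∀ y, uF y ≠ ⊥)
    (uFsmul : ∀ (a : K) (y : F), uF (a • y) = v a + uF y)
    (uFadd : ∀ x y, min (uF x) (uF y) ≤ uF (x + y)) :
    ((∀ x : E, uE x = ⊤ → x = 0) → (∀ y : F, uF y = ⊤ → y = 0) →
        ∀ z : E ⊗[K] F, tensVal uE uF z = ⊤ → z = 0) ∧
    {z : E ⊗[K] F | tensVal uE uF z = ⊤} =
      (Submodule.span K
        ({ z : E ⊗[K] F | ∃ x y, uE x = ⊤ ∧ z = x ⊗ₜ[K] y } ∪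
         { z : E ⊗[K] F | ∃ x y, uF y = ⊤ ∧ z = x ⊗ₜ[K] y }) : Set (E ⊗[K] F)) :=
  tensVal_kernel_general v hv0 hvbot hcomplete uE uEbot uEsmul uEadd uF uFbot uFsmul uFadd
end
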